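/- Let k, m be positive integers, K a finite field of characteristic 2, V an F₂-vector space, and Φ : K^m → V an injective F₂-linear map. Let W be a finite set of vectors in K^m and c : W → {1,…,k} a coloring. Assume that every subset of W of size at most 3k is linearly independent over K. Then for every function x : W × (K \ {0}) → F₂ satisfying Σ_{(w,a)} x(w,a)·(e_{c(w)}, Φ(a·w)) = (1_k, 0) in F₂^k × V, the support of x has size at least 3k. -/

import Mathlib

/-!
Suppose the support `S` of `x` had fewer than `3k` elements. The vectors `w` occurring in `S`
then form an independent family, so comparing the `V`-components (through the injective `Φ`)
forces, for each such `w`, the nonzero scalars `a` with `x (w, a) = 1` to sum to zero in `K`.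
In characteristic 2 a nonempty set of distinct nonzero elements summing to zero has at least
three elements. The `F₂^k`-component says that every colour occurs, so at least `k` vectors
occur, and `|S| ≥ 3k` after all.
-/

open Finset

theorem ZMod.sum_two_smul_eq_sum_filter_ne_zero {ι M : Type*} [Fintype ι] [AddCommMonoid M]
    [Module (ZMod 2) M] (x : ι → ZMod 2) (v : ι → M) :
    ∑ i, x i • v i = ∑ i with x i ≠ 0, v i := by
  rw [sum_filter]
  refine sum_congr rfl fun i _ => ?_
  obtain hx | hx : x i = 0 ∨ x i = 1 := by generalize x i = a; decide +revert
  all_goals simp [hx]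

theorem Finset.mem_image_of_sum_pi_single_eq_one {κ ι R : Type*} [DecidableEq ι]
    [AddCommMonoidWithOne R] [NeZero (1 : R)] {S : Finset κ} {f : κ → ι}
    (h : ∑ p ∈ S, (Pi.single (f p) 1 : ι → R) = fun _ => 1) (i : ι) : i ∈ S.image f := by
  by_contra hi
  have hterm : ∀ p ∈ S, (Pi.single (f p) 1 : ι → R) i = 0 := fun p hp =>
    Pi.single_eq_of_ne (fun hip => hi (mem_image.mpr ⟨p, hp, hip.symm⟩)) _
  have := congrFun h i
  rw [Finset.sum_apply, sum_eq_zero hterm] at this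
  exact zero_ne_one this

theorem LinearIndepOn.sum_fiber_eq_zero {κ ι R M : Type*} [DecidableEq ι] [Ring R]
    [AddCommGroup M] [Module R M] {v : ι → M} {s : Finset ι} (hv : LinearIndepOn R v s)
    {S : Finset κ} {f : κ → ι} (hf : ∀ p ∈ S, f p ∈ s) {a : κ → R}
    (h : ∑ p ∈ S, a p • v (f p) = 0) : ∀ i ∈ s, ∑ p ∈ S with f p = i, a p = 0 := by
  refine linearIndepOn_finset_iff.mp hv _ ?_
  rw [← h, ← sum_fiberwise_of_maps_to hf]
  refine sum_congr rfl fun i _ => ?_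
  rw [sum_smul]
  exact sum_congr rfl fun p hp => by rw [(mem_filter.mp hp).2]

theorem Finset.three_le_card_of_sum_eq_zero {κ R : Type*} [Ring R] [CharP R 2]
    {s : Finset κ} {a : κ → R} (ha : Set.InjOn a s) (h0 : ∀ p ∈ s, a p ≠ 0)
    (hs : s.Nonempty) (hsum : ∑ p ∈ s, a p = 0) : 3 ≤ s.card := by
  classical
  by_contra! hlt
  interval_cases hcard : s.card
  · exact hs.ne_empty (card_eq_zero.mp hcard)
  · obtain ⟨p, rfl⟩ := card_eq_one.mp hcard
    exact h0 p (mem_singleton_self p) (by simpa using hsum)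
  · obtain ⟨p, q, hpq, hspq⟩ := card_eq_two.mp hcard
    subst hspq
    rw [sum_pair hpq, CharTwo.add_eq_zero] at hsum
    exact hpq (ha (by simp) (by simp) hsum)

theorem stmt5 (k m : ℕ)
    {K : Type*} [Field K] [Fintype K] [DecidableEq K] [CharP K 2] [Algebra (ZMod 2) K]
    {V : Type*} [AddCommGroup V] [Module (ZMod 2) V]
    (Φ : (Fin m → K) →ₗ[ZMod 2] V) (hΦ : Function.Injective Φ)
    (W : Finset (Fin m → K)) (c : {w // w ∈ W} → Fin k)
    (hW : ∀ S : Finset (Fin m → K), S ⊆ W → S.card ≤ 3 * k →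
      LinearIndependent K (fun v : S => (v : Fin m → K)))
    (x : {w // w ∈ W} × {a : K // a ≠ 0} → ZMod 2)
    (hx : ∑ p : {w // w ∈ W} × {a : K // a ≠ 0},
        x p • (((Pi.single (c p.1) 1 : Fin k → ZMod 2),
          Φ ((p.2 : K) • (p.1 : Fin m → K))) : (Fin k → ZMod 2) × V)
        = (((fun _ => 1 : Fin k → ZMod 2), 0) : (Fin k → ZMod 2) × V)) :
    3 * k ≤ (Finset.univ.filter fun p => x p ≠ 0).card := by
  classical
  set S := Finset.univ.filter fun p => x p ≠ 0
  by_contra! hS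
  rw [ZMod.sum_two_smul_eq_sum_filter_ne_zero] at hx
  have hcolors : ∑ p ∈ S, (Pi.single (c p.1) 1 : Fin k → ZMod 2) = fun _ => 1 := by
    simpa only [Prod.fst_sum] using congrArg Prod.fst hx
  have hvec : ∑ p ∈ S, (p.2 : K) • (p.1 : Fin m → K) = 0 :=
    hΦ (by simpa only [Prod.snd_sum, map_sum, map_zero] using congrArg Prod.snd hx)
  set W₀ := S.image Prod.fst
  have hW₀ : LinearIndepOn K Subtype.val (W₀ : Set {w // w ∈ W}) := by
    rw [linearIndepOn_iff_image Subtype.val_injective.injOn, ← coe_image]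
    refine hW _ (fun w hw => ?_) ((card_image_le.trans card_image_le).trans hS.le)
    obtain ⟨v, -, rfl⟩ := mem_image.mp hw
    exact v.2
  have hfiber : ∀ w ∈ W₀, 3 ≤ (S.filter fun p => p.1 = w).card := fun w hw =>
    three_le_card_of_sum_eq_zero
      (fun p hp q hq hpq => Prod.ext ((mem_filter.mp hp).2.trans (mem_filter.mp hq).2.symm)
        (Subtype.ext hpq))
      (fun p _ => p.2.2)
      (by obtain ⟨p, hp, rfl⟩ := mem_image.mp hw; exact ⟨p, mem_filter.mpr ⟨hp, rfl⟩⟩)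
      (hW₀.sum_fiber_eq_zero (fun p hp => mem_image_of_mem _ hp) hvec w hw)
  have hk : k ≤ W₀.card :=
    calc k = (univ : Finset (Fin k)).card := (card_fin k).symm
      _ ≤ (W₀.image c).card := card_le_card fun i _ => by
          simpa only [W₀, image_image, Function.comp_def] using
            mem_image_of_sum_pi_single_eq_one hcolors i
      _ ≤ W₀.card := card_image_le
  refine hS.not_ge ?_
  calc 3 * k ≤ 3 * W₀.card := Nat.mul_le_mul_left 3 hk
    _ = ∑ _w ∈ W₀, 3 := by rw [sum_const, smul_eq_mul, mul_comm]
    _ ≤ ∑ w ∈ W₀, (S.filter fun p => p.1 = w).card := sum_le_sum hfiber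
    _ = S.card := (card_eq_sum_card_fiberwise fun p hp => mem_image_of_mem _ hp).symm
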